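/- Let d ≥ 1 be an integer. The function x ↦ K_{d/2−1}(|x|)·|x|^{1−d/2} is integrable on ℝ^d, and for every ξ ∈ ℝ^d one has ∫_{ℝ^d} e^{−i⟨x,ξ⟩} · K_{d/2−1}(|x|) · |x|^{1−d/2} dx = (2π)^{d/2} / (1 + |ξ|²). In particular the interaction potential φ(x) := (2π)^{−d/2} · K_{d/2−1}(|x|) · |x|^{1−d/2} satisfies ∫_{ℝ^d} e^{−i⟨x,ξ⟩} φ(x) dx = 1/(1 + |ξ|²) and ∫_{ℝ^d} φ(x) dx = 1. -/

import Mathlib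

open MeasureTheory
open scoped RealInnerProductSpace

/-- The modified Bessel function of the second kind. -/
noncomputable def besselK (ν x : ℝ) : ℝ :=
  ∫ t in Set.Ioi (0:ℝ), Real.exp (-x * Real.cosh t) * Real.cosh (ν * t)

/-!
Subordination to the heat kernel. The substitution `t = (a/2) eˢ` in `K_ν(a) = K_{-ν}(a)` gives
`K_{d/2-1}(|x|) |x|^{1-d/2} = ∫₀^∞ (2t)^{-d/2} e^{-t} e^{-|x|²/(4t)} dt`, a superposition of
Gaussians. The Gaussian `e^{-|x|²/(4t)}` has Fourier transform `(4πt)^{d/2} e^{-t|ξ|²}`, so by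
Fubini the Fourier transform equals `(2π)^{d/2} ∫₀^∞ e^{-(1+|ξ|²)t} dt = (2π)^{d/2}/(1+|ξ|²)`.
-/

open Real Set

lemma sq_div_four_le_cosh (s : ℝ) : s ^ 2 / 4 ≤ cosh s := by
  have hq := quadratic_le_exp_of_nonneg (abs_nonneg s)
  have habs := exp_abs_le s
  rw [cosh_eq]
  nlinarith [sq_abs s, abs_nonneg s]

lemma integrable_exp_neg_mul_sq_add_mul {b : ℝ} (hb : 0 < b) (c : ℝ) :
    Integrable (fun s : ℝ => exp (-b * s ^ 2 + c * s)) := by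
  simpa [Complex.norm_exp, sq] using
    (integrable_cexp_quadratic (b := b) (by simpa using hb) c 0).norm

lemma integrable_exp_neg_mul_cosh_add_mul {a : ℝ} (ha : 0 < a) (ν : ℝ) :
    Integrable (fun s : ℝ => exp (-a * cosh s + ν * s)) := by
  refine (integrable_exp_neg_mul_sq_add_mul (by positivity : 0 < a / 4) ν).mono'
    (by fun_prop) (ae_of_all _ fun s => ?_)
  rw [norm_of_nonneg (exp_pos _).le, exp_le_exp]
  nlinarith [sq_div_four_le_cosh s]

lemma besselK_eq_half_integral (ν : ℝ) {a : ℝ} (ha : 0 < a) :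
    besselK ν a = (∫ s, exp (-a * cosh s + ν * s)) / 2 := by
  have hint := integrable_exp_neg_mul_cosh_add_mul ha
  have hIic : ∫ s in Iic 0, exp (-a * cosh s + ν * s) =
      ∫ s in Ioi 0, exp (-a * cosh s + -ν * s) := by
    rw [← neg_zero, ← integral_comp_neg_Ioi]
    simp [cosh_neg]
  rw [← intervalIntegral.integral_Iic_add_Ioi (hint ν).integrableOn (hint ν).integrableOn, hIic,
    ← integral_add (hint (-ν)).integrableOn (hint ν).integrableOn, besselK, ← integral_div]
  refine setIntegral_congr_fun measurableSet_Ioi fun s _ => ?_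
  rw [cosh_eq (ν * s)]
  simp only [exp_add, neg_mul]
  ring

lemma integral_comp_mul_exp {E : Type*} [NormedAddCommGroup E] [NormedSpace ℝ E]
    (g : ℝ → E) {c : ℝ} (hc : 0 < c) :
    ∫ s, (c * exp s) • g (c * exp s) = ∫ t in Ioi 0, g t := by
  have himage : (fun s => c * exp s) '' univ = Ioi 0 := by
    rw [image_univ]
    ext t
    refine ⟨by rintro ⟨s, rfl⟩; exact mul_pos hc (exp_pos s), fun ht => ⟨log (t / c), ?_⟩⟩
    show c * exp (log (t / c)) = t
    rw [exp_log (div_pos ht hc), mul_div_cancel₀ _ hc.ne']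
  rw [← himage, integral_image_eq_integral_abs_deriv_smul MeasurableSet.univ
    (fun s _ => ((hasDerivAt_exp s).const_mul c).hasDerivWithinAt)
    (fun s _ r _ h => exp_injective (mul_left_cancel₀ hc.ne' h)), setIntegral_univ]
  simp only [abs_of_pos (mul_pos hc (exp_pos _))]

lemma besselK_neg (ν x : ℝ) : besselK (-ν) x = besselK ν x := by
  simp only [besselK, neg_mul, cosh_neg]

lemma besselK_mul_rpow_neg (ν : ℝ) {a : ℝ} (ha : 0 < a) :
    besselK ν a * a ^ (-ν) = ∫ t in Ioi 0, (2 * t) ^ (-ν - 1) * exp (-(t + a ^ 2 / (4 * t))) := by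
  rw [← besselK_neg, besselK_eq_half_integral _ ha, ← integral_comp_mul_exp _ (half_pos ha),
    ← integral_div, ← integral_mul_const]
  congr 1 with s
  have hes := exp_pos s
  have hpow : (2 * (a / 2 * exp s)) ^ (-ν - 1) = a ^ (-ν) * exp (-ν * s) / (a * exp s) := by
    rw [show 2 * (a / 2 * exp s) = a * exp s by ring, rpow_sub_one (by positivity),
      mul_rpow ha.le hes.le, ← exp_mul, mul_comm s]
  have hcosh : a / 2 * exp s + a ^ 2 / (4 * (a / 2 * exp s)) = a * cosh s := by
    rw [cosh_eq, exp_neg]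
    field_simp
    ring
  rw [smul_eq_mul, hpow, hcosh, exp_add]
  field_simp

lemma rpow_neg_mul_rpow_four_pi_mul {t : ℝ} (ht : 0 < t) (r : ℝ) :
    (2 * t) ^ (-r) * (4 * π * t) ^ r = (2 * π) ^ r := by
  have h2t : 0 < 2 * t := by positivity
  rw [show 4 * π * t = 2 * π * (2 * t) by ring, mul_rpow (by positivity) h2t.le,
    rpow_neg h2t.le]
  field_simp

section InnerProductSpace

open Module

variable {V : Type*} [NormedAddCommGroup V] [InnerProductSpace ℝ V]

noncomputable def besselPotentialIntegrand (t : ℝ) (x : V) : ℝ :=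
  (2 * t) ^ (-(finrank ℝ V : ℝ) / 2) * exp (-t) * exp (-(‖x‖ ^ 2 / (4 * t)))

lemma besselPotentialIntegrand_nonneg {t : ℝ} (ht : 0 < t) (x : V) :
    0 ≤ besselPotentialIntegrand t x := by
  unfold besselPotentialIntegrand
  positivity

lemma integral_Ioi_besselPotentialIntegrand {x : V} (hx : x ≠ 0) :
    ∫ t in Ioi 0, besselPotentialIntegrand t x =
      besselK ((finrank ℝ V : ℝ) / 2 - 1) ‖x‖ * ‖x‖ ^ (1 - (finrank ℝ V : ℝ) / 2) := by
  rw [show 1 - (finrank ℝ V : ℝ) / 2 = -((finrank ℝ V : ℝ) / 2 - 1) by ring,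
    besselK_mul_rpow_neg _ (norm_pos_iff.2 hx)]
  refine setIntegral_congr_fun measurableSet_Ioi fun t _ => ?_
  rw [besselPotentialIntegrand, mul_assoc, ← exp_add, neg_add]
  ring_nf

variable [FiniteDimensional ℝ V] [MeasurableSpace V] [BorelSpace V]

lemma integral_exp_neg_sq_norm_div {t : ℝ} (ht : 0 < t) :
    ∫ x : V, exp (-(‖x‖ ^ 2 / (4 * t))) = (4 * π * t) ^ ((finrank ℝ V : ℝ) / 2) := by
  have h := GaussianFourier.integral_rexp_neg_mul_sq_norm (V := V)
    (inv_pos.2 (mul_pos four_pos ht))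
  rw [div_inv_eq_mul, ← mul_assoc, mul_comm π 4] at h
  simpa [div_eq_inv_mul] using h

lemma fourier_exp_neg_sq_norm_div {t : ℝ} (ht : 0 < t) (ξ : V) :
    ∫ x : V, Complex.exp (-(Complex.I * (⟪x, ξ⟫ : ℝ))) * (exp (-(‖x‖ ^ 2 / (4 * t))) : ℂ) =
      (((4 * π * t) ^ ((finrank ℝ V : ℝ) / 2) * exp (-(t * ‖ξ‖ ^ 2)) : ℝ) : ℂ) := by
  have hb : 0 < ((4 * t)⁻¹ : ℂ).re := by norm_cast; positivity
  have h := GaussianFourier.integral_cexp_neg_mul_sq_norm_add hb (-Complex.I) ξ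
  have hexp (x : V) :
      Complex.exp (-(Complex.I * (⟪x, ξ⟫ : ℝ))) * (exp (-(‖x‖ ^ 2 / (4 * t))) : ℂ) =
      Complex.exp (-(4 * (t : ℂ))⁻¹ * ‖x‖ ^ 2 + -Complex.I * (⟪ξ, x⟫ : ℝ)) := by
    rw [Complex.ofReal_exp, ← Complex.exp_add, real_inner_comm]
    push_cast
    ring_nf
  rw [integral_congr_ae (ae_of_all _ hexp), h, Complex.ofReal_mul,
    Complex.ofReal_cpow (by positivity), Complex.ofReal_exp]
  push_cast
  have ht' : (t : ℂ) ≠ 0 := Complex.ofReal_ne_zero.2 ht.ne'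
  congr 2
  · rw [div_inv_eq_mul]
    ring
  · rw [neg_sq, Complex.I_sq]
    field_simp

lemma integral_besselPotentialIntegrand {t : ℝ} (ht : 0 < t) :
    ∫ x : V, besselPotentialIntegrand t x = (2 * π) ^ ((finrank ℝ V : ℝ) / 2) * exp (-t) := by
  simp only [besselPotentialIntegrand]
  rw [integral_const_mul, integral_exp_neg_sq_norm_div ht, neg_div,
    mul_right_comm, rpow_neg_mul_rpow_four_pi_mul ht]

lemma integrable_besselPotentialIntegrand {t : ℝ} (ht : 0 < t) :
    Integrable (besselPotentialIntegrand t : V → ℝ) :=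
  Integrable.of_integral_ne_zero <| by
    rw [integral_besselPotentialIntegrand ht]
    positivity

lemma fourier_besselPotentialIntegrand {t : ℝ} (ht : 0 < t) (ξ : V) :
    ∫ x : V, Complex.exp (-(Complex.I * (⟪x, ξ⟫ : ℝ))) * (besselPotentialIntegrand t x : ℂ) =
      (((2 * π) ^ ((finrank ℝ V : ℝ) / 2) * exp (-(1 + ‖ξ‖ ^ 2) * t) : ℝ) : ℂ) := by
  simp_rw [besselPotentialIntegrand, Complex.ofReal_mul, mul_left_comm (Complex.exp _),
    integral_const_mul, fourier_exp_neg_sq_norm_div ht]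
  simp only [← Complex.ofReal_mul]
  congr 1
  rw [neg_div, ← rpow_neg_mul_rpow_four_pi_mul ht,
    show -(1 + ‖ξ‖ ^ 2) * t = -t + -(t * ‖ξ‖ ^ 2) by ring, exp_add]
  ring

lemma integrable_uncurry_besselPotentialIntegrand :
    Integrable (Function.uncurry (besselPotentialIntegrand (V := V)))
      ((volume.restrict (Ioi 0)).prod volume) := by
  have hmeas : Measurable (Function.uncurry (besselPotentialIntegrand (V := V))) := by
    unfold Function.uncurry besselPotentialIntegrand
    fun_prop
  refine (integrable_prod_iff hmeas.aestronglyMeasurable).2 ⟨?_, ?_⟩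
  · filter_upwards [ae_restrict_mem measurableSet_Ioi] with t ht
    exact integrable_besselPotentialIntegrand ht
  · refine ((exp_neg_integrableOn_Ioi 0 one_pos).const_mul
      ((2 * π) ^ ((finrank ℝ V : ℝ) / 2))).congr ?_
    filter_upwards [ae_restrict_mem measurableSet_Ioi] with t ht
    simp only [Function.uncurry_apply_pair, norm_of_nonneg (besselPotentialIntegrand_nonneg ht _),
      integral_besselPotentialIntegrand ht, neg_mul, one_mul]

variable [Nontrivial V]

theorem integrable_besselK_potential :
    Integrable (fun x : V =>
      besselK ((finrank ℝ V : ℝ) / 2 - 1) ‖x‖ * ‖x‖ ^ (1 - (finrank ℝ V : ℝ) / 2)) :=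
  integrable_uncurry_besselPotentialIntegrand.integral_prod_right.congr <|
    (Measure.ae_ne volume 0).mono fun _ hx => integral_Ioi_besselPotentialIntegrand hx

theorem fourier_besselK_potential (ξ : V) :
    ∫ x : V, Complex.exp (-(Complex.I * (⟪x, ξ⟫ : ℝ))) *
        ((besselK ((finrank ℝ V : ℝ) / 2 - 1) ‖x‖ * ‖x‖ ^ (1 - (finrank ℝ V : ℝ) / 2) : ℝ) : ℂ) =
      (((2 * π) ^ ((finrank ℝ V : ℝ) / 2) / (1 + ‖ξ‖ ^ 2) : ℝ) : ℂ) := by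
  set F : ℝ → V → ℂ := fun t x =>
    Complex.exp (-(Complex.I * (⟪x, ξ⟫ : ℝ))) * (besselPotentialIntegrand t x : ℂ)
  have hF : Integrable (Function.uncurry F) ((volume.restrict (Ioi 0)).prod volume) :=
    integrable_uncurry_besselPotentialIntegrand.ofReal.bdd_mul (c := 1) (by fun_prop)
      (ae_of_all _ fun p => by simp [Complex.norm_exp])
  have hb : 0 < 1 + ‖ξ‖ ^ 2 := by positivity
  calc _ = ∫ x : V, ∫ t in Ioi 0, F t x :=
        integral_congr_ae <| (Measure.ae_ne volume 0).mono fun x hx => by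
          rw [← integral_Ioi_besselPotentialIntegrand hx, ← integral_complex_ofReal,
            ← integral_const_mul]
    _ = ∫ t in Ioi 0, ∫ x : V, F t x := (integral_integral_swap hF).symm
    _ = ∫ t in Ioi 0, (((2 * π) ^ ((finrank ℝ V : ℝ) / 2) * exp (-(1 + ‖ξ‖ ^ 2) * t) : ℝ) : ℂ) :=
        setIntegral_congr_fun measurableSet_Ioi fun t ht => fourier_besselPotentialIntegrand ht ξ
    _ = _ := by
        rw [integral_complex_ofReal, integral_const_mul, integral_exp_mul_Ioi (neg_neg_of_pos hb),
          mul_zero, exp_zero, neg_div_neg_eq, mul_one_div]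

end InnerProductSpace

theorem besselK_fourier_transform (d : ℕ) (hd : 1 ≤ d) :
    Integrable (fun x : EuclideanSpace ℝ (Fin d) =>
        besselK ((d : ℝ) / 2 - 1) ‖x‖ * ‖x‖ ^ (1 - (d : ℝ) / 2)) volume ∧
    (∀ ξ : EuclideanSpace ℝ (Fin d),
      (∫ x : EuclideanSpace ℝ (Fin d),
          Complex.exp (-(Complex.I * (⟪x, ξ⟫ : ℝ))) *
            ((besselK ((d : ℝ) / 2 - 1) ‖x‖ * ‖x‖ ^ (1 - (d : ℝ) / 2) : ℝ) : ℂ))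
        = (((2 * Real.pi) ^ ((d : ℝ) / 2) / (1 + ‖ξ‖ ^ 2) : ℝ) : ℂ)) ∧
    (∀ ξ : EuclideanSpace ℝ (Fin d),
      (∫ x : EuclideanSpace ℝ (Fin d),
          Complex.exp (-(Complex.I * (⟪x, ξ⟫ : ℝ))) *
            (((2 * Real.pi) ^ (-(d : ℝ) / 2) *
              (besselK ((d : ℝ) / 2 - 1) ‖x‖ * ‖x‖ ^ (1 - (d : ℝ) / 2)) : ℝ) : ℂ))
        = ((1 / (1 + ‖ξ‖ ^ 2) : ℝ) : ℂ)) ∧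
    (∫ x : EuclideanSpace ℝ (Fin d),
        (2 * Real.pi) ^ (-(d : ℝ) / 2) *
          (besselK ((d : ℝ) / 2 - 1) ‖x‖ * ‖x‖ ^ (1 - (d : ℝ) / 2))) = 1 := by
  have : NeZero d := ⟨by omega⟩
  have hdim : (Module.finrank ℝ (EuclideanSpace ℝ (Fin d)) : ℝ) = d := by simp
  have hint := integrable_besselK_potential (V := EuclideanSpace ℝ (Fin d))
  have hFT := fourier_besselK_potential (V := EuclideanSpace ℝ (Fin d))
  simp only [hdim] at hint hFT
  have hcancel : (2 * π) ^ (-(d : ℝ) / 2) * (2 * π) ^ ((d : ℝ) / 2) = 1 := by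
    rw [← rpow_add (by positivity), neg_div, neg_add_cancel, rpow_zero]
  refine ⟨hint, hFT, fun ξ => ?_, ?_⟩
  · conv_lhs => enter [2, x]; rw [Complex.ofReal_mul, mul_left_comm]
    rw [integral_const_mul, hFT ξ, ← Complex.ofReal_mul, mul_div_assoc', hcancel]
  · have h0 := hFT 0
    simp only [inner_zero_right, Complex.ofReal_zero, mul_zero, neg_zero, Complex.exp_zero,
      one_mul, integral_complex_ofReal, norm_zero] at h0
    rw [integral_const_mul, Complex.ofReal_inj.1 h0]
    simp [hcancel]
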